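/- Fix d ≥ 2, a positive integer K, arbitrary labels y_2,…,y_d ∈ {1,-1}, the test set Z_test = {(e_1,1)}, and the training family Z_train consisting of (e_i, y_i) for i = 2,…,d, the point z_target = (e_1,1), and K duplicated copies z_bar^1,…,z_bar^K of (-e_1,1) (so n = d+K). Then for every θ ∈ ℝ^d, the empirical-loss Hessian H_θ is invertible, I_θ(z_target, Z_test) < 0, and I_θ(z_bar^k, Z_test) > 0 for every k ∈ {1,…,K}; consequently, for every θ there are at least K members of the training family whose influence strictly exceeds that of z_target, so z_target never attains a top-K influence ranking. -/

import Mathlib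

open Matrix
noncomputable section

/-- The sigmoid function `σ(t) = 1/(1+exp(-t))`. -/
def sigmoid (t : ℝ) : ℝ := 1 / (1 + Real.exp (-t))

/-- A labeled sample `(x, y)` with `x ∈ ℝ^d` and label `y ∈ ℝ` (intended `y ∈ {1,-1}`). -/
abbrev Sample (d : ℕ) := (Fin d → ℝ) × ℝ

/-- Gradient in `θ` of the logistic loss `L((x,y),θ) = log(1+exp(-y⟨x,θ⟩))`,
namely `-y·σ(-y⟨x,θ⟩)·x`. -/
def lossGrad {d : ℕ} (z : Sample d) (θ : Fin d → ℝ) : Fin d → ℝ :=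
  (-z.2 * sigmoid (-(z.2 * (z.1 ⬝ᵥ θ)))) • z.1

/-- Empirical-loss Hessian `H_θ = (1/n)·Σ_i σ(⟨x_i,θ⟩)σ(-⟨x_i,θ⟩)·x_i x_iᵀ`. -/
def hess {d n : ℕ} (Ztrain : Fin n → Sample d) (θ : Fin d → ℝ) : Matrix (Fin d) (Fin d) ℝ :=
  (n : ℝ)⁻¹ • ∑ i, (sigmoid ((Ztrain i).1 ⬝ᵥ θ) * sigmoid (-((Ztrain i).1 ⬝ᵥ θ))) •
    vecMulVec (Ztrain i).1 (Ztrain i).1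

/-- Influence of a training sample `z` on a test set `Ztest`:
`I_θ(z, Ztest) = Σ_j -g_{ztest_j}(θ)ᵀ H_θ⁻¹ g_z(θ)`. -/
def influence {d n m : ℕ} (Ztrain : Fin n → Sample d) (θ : Fin d → ℝ)
    (z : Sample d) (Ztest : Fin m → Sample d) : ℝ :=
  ∑ j, -(lossGrad (Ztest j) θ ⬝ᵥ ((hess Ztrain θ)⁻¹ *ᵥ lossGrad z θ))


/-- The concrete training family of size `d+K`: index `0` is the target `(e_1, 1)`,
indices `1,...,d-1` are `(e_i, y_i)`, and indices `d,...,d+K-1` are `K` duplicated copies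
of `(-e_1, 1)`. -/
def trainFamK (d K : ℕ) (hd : 0 < d) (y : Fin d → ℝ) (i : Fin (d + K)) : Sample d :=
  if h : (i : ℕ) < d then
    if _h0 : (i : ℕ) = 0 then (Pi.single (⟨0, hd⟩ : Fin d) 1, 1)
    else (Pi.single (⟨(i : ℕ), h⟩ : Fin d) 1, y ⟨(i : ℕ), h⟩)
  else (-Pi.single (⟨0, hd⟩ : Fin d) 1, 1)

/-- The concrete test set `Z_test = {(e_1, 1)}`. -/
def testFam (d : ℕ) (hd : 0 < d) : Fin 1 → Sample d :=
  fun _ => (Pi.single (⟨0, hd⟩ : Fin d) 1, 1)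

/-! Every feature vector of the training family is `±e_j`, and each `e_j` occurs, so `H_θ` is
positive definite; hence so is `H_θ⁻¹`, and its first diagonal entry is positive. The test
gradient and the gradients of the target and of its mirror images are all multiples of `e_1`
(coordinate `0` of `Fin d`), so each of their influences is `σ(-θ_1) · c · (H_θ⁻¹)_{11}`,
with `c = -σ(-θ_1)` for the target and `c = σ(θ_1)` for a copy of `(-e_1, 1)`: the signs do
not depend on `θ`. -/

lemma sigmoid_pos (t : ℝ) : 0 < sigmoid t := by
  unfold sigmoid
  positivity

lemma sigmoid_mul_sigmoid_neg_pos (t : ℝ) : 0 < sigmoid t * sigmoid (-t) :=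
  mul_pos (sigmoid_pos t) (sigmoid_pos (-t))

lemma lossGrad_single_one {d : ℕ} (j : Fin d) (θ : Fin d → ℝ) :
    lossGrad (Pi.single j 1, 1) θ = (-sigmoid (-θ j)) • Pi.single j 1 := by
  simp [lossGrad, single_dotProduct]

lemma lossGrad_neg_single_one {d : ℕ} (j : Fin d) (θ : Fin d → ℝ) :
    lossGrad (-Pi.single j 1, 1) θ = sigmoid (θ j) • Pi.single j 1 := by
  simp [lossGrad, neg_dotProduct, single_dotProduct]

section Hessian

variable {d n : ℕ} (Z : Fin n → Sample d) (θ : Fin d → ℝ)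

lemma isHermitian_hess : (hess Z θ).IsHermitian := by
  ext a b
  simp [hess, Matrix.sum_apply, vecMulVec_apply, mul_comm]

lemma dotProduct_hess_mulVec (v : Fin d → ℝ) :
    v ⬝ᵥ (hess Z θ *ᵥ v) = (n : ℝ)⁻¹ *
      ∑ i, sigmoid ((Z i).1 ⬝ᵥ θ) * sigmoid (-((Z i).1 ⬝ᵥ θ)) * ((Z i).1 ⬝ᵥ v) ^ 2 := by
  simp only [hess, smul_mulVec, Matrix.sum_mulVec, vecMulVec_mulVec, dotProduct_smul,
    dotProduct_sum, smul_eq_mul, MulOpposite.smul_eq_mul_unop, MulOpposite.unop_op]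
  simp only [dotProduct_comm v, sq, mul_assoc]

lemma posDef_hess (hZ : ∀ v ≠ 0, ∃ i, (Z i).1 ⬝ᵥ v ≠ 0) : (hess Z θ).PosDef := by
  refine .of_dotProduct_mulVec_pos (isHermitian_hess Z θ) fun v hv => ?_
  obtain ⟨i, hi⟩ := hZ v hv
  have hn : 0 < (n : ℝ)⁻¹ := by have := i.pos; positivity
  rw [star_trivial, dotProduct_hess_mulVec]
  refine mul_pos hn (Finset.sum_pos' (fun j _ => ?_) ⟨i, Finset.mem_univ _, ?_⟩)
  · exact mul_nonneg (sigmoid_mul_sigmoid_neg_pos _).le (sq_nonneg _)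
  · exact mul_pos (sigmoid_mul_sigmoid_neg_pos _) (sq_pos_iff.mpr hi)

end Hessian

lemma influence_testFam_eq {d n : ℕ} (hd : 0 < d) (Z : Fin n → Sample d) (θ : Fin d → ℝ)
    (z : Sample d) (c : ℝ) (hz : lossGrad z θ = c • Pi.single ⟨0, hd⟩ 1) :
    influence Z θ z (testFam d hd) =
      sigmoid (-θ ⟨0, hd⟩) * c * (hess Z θ)⁻¹ ⟨0, hd⟩ ⟨0, hd⟩ := by
  simp only [influence, testFam, Fin.sum_univ_one, lossGrad_single_one, hz, mulVec_smul,
    mulVec_single_one, smul_dotProduct, single_dotProduct, Pi.smul_apply, col_apply, smul_eq_mul,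
    one_mul]
  ring

section TrainFamily

variable {d : ℕ} (K : ℕ) (hd : 0 < d) (y : Fin d → ℝ)

lemma trainFamK_fst_of_lt (i : Fin (d + K)) (hi : (i : ℕ) < d) :
    (trainFamK d K hd y i).1 = Pi.single ⟨i, hi⟩ 1 := by
  unfold trainFamK
  split_ifs with h0
  · simp only [h0]
  · rfl

lemma trainFamK_zero (h : 0 < d + K) :
    trainFamK d K hd y ⟨0, h⟩ = (Pi.single ⟨0, hd⟩ 1, 1) := by
  simp [trainFamK, hd]

lemma trainFamK_of_le (i : Fin (d + K)) (hi : d ≤ (i : ℕ)) :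
    trainFamK d K hd y i = (-Pi.single ⟨0, hd⟩ 1, 1) := by
  simp [trainFamK, hi]

lemma posDef_hess_trainFamK (θ : Fin d → ℝ) : (hess (trainFamK d K hd y) θ).PosDef := by
  refine posDef_hess _ θ fun v hv => ?_
  obtain ⟨j, hj⟩ := Function.ne_iff.mp hv
  refine ⟨Fin.castAdd K j, ?_⟩
  rw [trainFamK_fst_of_lt K hd y _ j.isLt, single_dotProduct]
  simpa using hj

end TrainFamily

/-- for the concrete training family with `K` duplicated copies of `(-e_1,1)`,
for every `θ` the empirical-loss Hessian is invertible, the target `(e_1,1)` has negative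
influence, every duplicated copy has positive influence, and hence at least `K` training
samples have strictly larger influence than the target, so the target never attains a
top-`K` influence ranking. -/
theorem influence_impossibility_topK_concrete (d K : ℕ) (hd : 2 ≤ d)
    (y : Fin d → ℝ) (θ : Fin d → ℝ) :
    IsUnit (hess (trainFamK d K (by omega) y) θ) ∧
    influence (trainFamK d K (by omega) y) θ
        (trainFamK d K (by omega) y ⟨0, by omega⟩) (testFam d (by omega)) < 0 ∧
    (∀ i : Fin (d + K), d ≤ (i : ℕ) →
      0 < influence (trainFamK d K (by omega) y) θ
            (trainFamK d K (by omega) y i) (testFam d (by omega))) ∧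
    K ≤ (Finset.univ.filter (fun i : Fin (d + K) =>
          influence (trainFamK d K (by omega) y) θ
              (trainFamK d K (by omega) y ⟨0, by omega⟩) (testFam d (by omega)) <
            influence (trainFamK d K (by omega) y) θ
              (trainFamK d K (by omega) y i) (testFam d (by omega)))).card := by
  have hd0 : 0 < d := by omega
  have hH := posDef_hess_trainFamK K hd0 y θ
  have hH00 := hH.inv.diag_pos (i := ⟨0, hd0⟩)
  have hσ := sigmoid_pos (-θ ⟨0, hd0⟩)
  have htarget : influence (trainFamK d K hd0 y) θ (trainFamK d K hd0 y ⟨0, by omega⟩)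
      (testFam d hd0) < 0 := by
    rw [influence_testFam_eq hd0 _ θ _ _ (by rw [trainFamK_zero, lossGrad_single_one]),
      mul_neg, neg_mul]
    exact neg_neg_of_pos (mul_pos (mul_pos hσ hσ) hH00)
  have hcopy : ∀ i : Fin (d + K), d ≤ (i : ℕ) →
      0 < influence (trainFamK d K hd0 y) θ (trainFamK d K hd0 y i) (testFam d hd0) := by
    intro i hi
    rw [influence_testFam_eq hd0 _ θ _ _
      (by rw [trainFamK_of_le K hd0 y i hi, lossGrad_neg_single_one])]
    exact mul_pos (mul_pos hσ (sigmoid_pos _)) hH00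
  refine ⟨hH.isUnit, htarget, hcopy, ?_⟩
  calc K = (Finset.univ : Finset (Fin K)).card := (Finset.card_fin K).symm
    _ ≤ _ := Finset.card_le_card_of_injOn (Fin.natAdd d)
        (fun k _ => by simpa using htarget.trans (hcopy _ (by simp)))
        (Fin.natAdd_injective K d).injOn
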